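/- arXiv:1910.10028 — 2 statements merged into one kernel-verified Lean document; each statement's English description precedes it below -/
import Mathlib

section
/- Let U ⊆ ℝ² be open with smooth Christoffel symbols Γ_{ij}{}^k whose torsion components T^k = (1/2)(Γ_{12}{}^k − Γ_{21}{}^k) form a parallel abstract torsion tensor (T^k{}_{;i} = 0 on U for all i,k). Then at every point p ∈ U where (T¹(p), T²(p)) ≠ (0,0), the Ricci matrix is singular: ρ_{11}(p) ρ_{22}(p) − ρ_{12}(p) ρ_{21}(p) = 0. -/
noncomputable section

open scoped BigOperators

/-- The standard coordinate directions in `ℝ × ℝ`. -/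
def coordVec : Fin 2 → ℝ × ℝ := ![(1, 0), (0, 1)]

/-- Partial derivative `∂_i f` of `f : ℝ × ℝ → ℝ`. -/
noncomputable def pder (i : Fin 2) (f : ℝ × ℝ → ℝ) (p : ℝ × ℝ) : ℝ :=
  fderiv ℝ f p (coordVec i)

/-- Curvature tensor `R_{ijk}{}^l` of the connection with Christoffel symbols `Γ`. -/
noncomputable def affCurv (Γ : Fin 2 → Fin 2 → Fin 2 → ℝ × ℝ → ℝ)
    (i j k l : Fin 2) (p : ℝ × ℝ) : ℝ :=
  pder i (Γ j k l) p - pder j (Γ i k l) p +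
    ∑ m : Fin 2, (Γ i m l p * Γ j k m p - Γ j m l p * Γ i k m p)

/-- Ricci tensor `ρ_{jk} = R_{1jk}{}^1 + R_{2jk}{}^2`. -/
noncomputable def affRicci (Γ : Fin 2 → Fin 2 → Fin 2 → ℝ × ℝ → ℝ)
    (j k : Fin 2) (p : ℝ × ℝ) : ℝ :=
  affCurv Γ 0 j k 0 p + affCurv Γ 1 j k 1 p

/-- Covariant derivative of the Ricci tensor,
`ρ_{jk;i} = ∂_i ρ_{jk} − Σ_m (Γ_{ij}{}^m ρ_{mk} + Γ_{ik}{}^m ρ_{jm})`. -/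
noncomputable def affRicciCov (Γ : Fin 2 → Fin 2 → Fin 2 → ℝ × ℝ → ℝ)
    (i j k : Fin 2) (p : ℝ × ℝ) : ℝ :=
  pder i (affRicci Γ j k) p -
    ∑ m : Fin 2, (Γ i j m p * affRicci Γ m k p + Γ i k m p * affRicci Γ j m p)

/-- Torsion components `T^k = (1/2)(Γ_{12}{}^k − Γ_{21}{}^k)`. -/
noncomputable def affTor (Γ : Fin 2 → Fin 2 → Fin 2 → ℝ × ℝ → ℝ)
    (k : Fin 2) (p : ℝ × ℝ) : ℝ :=
  (1 / 2) * (Γ 0 1 k p - Γ 1 0 k p)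

/-- Covariant derivative of the torsion tensor,
`T^k{}_{;i} = ∂_i T^k + Σ_m Γ_{im}{}^k T^m − (Γ_{i1}{}^1 + Γ_{i2}{}^2) T^k`. -/
noncomputable def affTorCov (Γ : Fin 2 → Fin 2 → Fin 2 → ℝ × ℝ → ℝ)
    (i k : Fin 2) (p : ℝ × ℝ) : ℝ :=
  pder i (affTor Γ k) p + (∑ m : Fin 2, Γ i m k p * affTor Γ m p)
    - (Γ i 0 0 p + Γ i 1 1 p) * affTor Γ k p

open Filter Topology

/- ### Auxiliary lemmas -/

lemma pder_add {f g : ℝ × ℝ → ℝ} {p : ℝ × ℝ} (i : Fin 2)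
    (hf : DifferentiableAt ℝ f p) (hg : DifferentiableAt ℝ g p) :
    pder i (fun q => f q + g q) p = pder i f p + pder i g p := by
  simp [pder, fderiv_fun_add hf hg]

lemma pder_sub {f g : ℝ × ℝ → ℝ} {p : ℝ × ℝ} (i : Fin 2)
    (hf : DifferentiableAt ℝ f p) (hg : DifferentiableAt ℝ g p) :
    pder i (fun q => f q - g q) p = pder i f p - pder i g p := by
  simp [pder, fderiv_fun_sub hf hg]

lemma pder_mul {f g : ℝ × ℝ → ℝ} {p : ℝ × ℝ} (i : Fin 2)
    (hf : DifferentiableAt ℝ f p) (hg : DifferentiableAt ℝ g p) :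
    pder i (fun q => f q * g q) p = pder i f p * g p + f p * pder i g p := by
  simp [pder, fderiv_fun_mul hf hg]; ring

lemma contDiffOn_pder {U : Set (ℝ × ℝ)} (hU : IsOpen U) {f : ℝ × ℝ → ℝ}
    (hf : ContDiffOn ℝ (⊤ : ℕ∞) f U) (i : Fin 2) :
    ContDiffOn ℝ (⊤ : ℕ∞) (pder i f) U :=
  (hf.fderiv_of_isOpen hU (by simp)).clm_apply contDiffOn_const

lemma diffAt_of_contDiffOn {U : Set (ℝ × ℝ)} (hU : IsOpen U) {f : ℝ × ℝ → ℝ}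
    (hf : ContDiffOn ℝ (⊤ : ℕ∞) f U) {p : ℝ × ℝ} (hp : p ∈ U) :
    DifferentiableAt ℝ f p :=
  (hf.contDiffAt (hU.mem_nhds hp)).differentiableAt (by simp)

lemma pder_comm {U : Set (ℝ × ℝ)} (hU : IsOpen U) {f : ℝ × ℝ → ℝ}
    (hf : ContDiffOn ℝ (⊤ : ℕ∞) f U) {p : ℝ × ℝ} (hp : p ∈ U) (i j : Fin 2) :
    pder i (pder j f) p = pder j (pder i f) p := by
  have hf' : ContDiffOn ℝ (⊤ : ℕ∞) (fderiv ℝ f) U := hf.fderiv_of_isOpen hU (by simp)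
  have hd' : DifferentiableAt ℝ (fderiv ℝ f) p :=
    (hf'.contDiffAt (hU.mem_nhds hp)).differentiableAt (by simp)
  have hev : ∀ᶠ y in 𝓝 p, HasFDerivAt f (fderiv ℝ f y) y := by
    filter_upwards [hU.mem_nhds hp] with y hy
    exact (diffAt_of_contDiffOn hU hf hy).hasFDerivAt
  have hsymm := second_derivative_symmetric_of_eventually hev hd'.hasFDerivAt
  have key : ∀ a b : Fin 2, pder a (pder b f) p
      = fderiv ℝ (fderiv ℝ f) p (coordVec a) (coordVec b) := by
    intro a b
    have : pder b f = fun q => (fderiv ℝ f q) (coordVec b) := rfl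
    rw [show pder a (pder b f) p = fderiv ℝ (fun q => (fderiv ℝ f q) (coordVec b)) p (coordVec a) from rfl]
    rw [fderiv_clm_apply hd' (differentiableAt_const _)]
    simp
  rw [key, key, hsymm]

/-- if the torsion of the connection is parallel, then at every point
where the torsion is nonzero the Ricci matrix is singular. -/
theorem ricci_singular_of_parallel_torsion (U : Set (ℝ × ℝ)) (hU : IsOpen U)
    (Γ : Fin 2 → Fin 2 → Fin 2 → ℝ × ℝ → ℝ)
    (hΓ : ∀ i j k, ContDiffOn ℝ (⊤ : ℕ∞) (Γ i j k) U)
    (hpar : ∀ i k, ∀ p ∈ U, affTorCov Γ i k p = 0) :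
    ∀ p ∈ U, (affTor Γ 0 p ≠ 0 ∨ affTor Γ 1 p ≠ 0) →
      affRicci Γ 0 0 p * affRicci Γ 1 1 p
        - affRicci Γ 0 1 p * affRicci Γ 1 0 p = 0 := by
  intro p hp hT
  -- smoothness of the torsion components
  have hTcd : ∀ k, ContDiffOn ℝ (⊤ : ℕ∞) (affTor Γ k) U := by
    intro k
    have : ContDiffOn ℝ (⊤ : ℕ∞) (fun q => (1/2 : ℝ) * (Γ 0 1 k q - Γ 1 0 k q)) U :=
      contDiffOn_const.mul ((hΓ 0 1 k).sub (hΓ 1 0 k))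
    exact this
  -- pointwise differentiability
  have hdΓ : ∀ i j k, DifferentiableAt ℝ (Γ i j k) p :=
    fun i j k => diffAt_of_contDiffOn hU (hΓ i j k) hp
  have hdT : ∀ k, DifferentiableAt ℝ (affTor Γ k) p :=
    fun k => diffAt_of_contDiffOn hU (hTcd k) hp
  have hdpT : ∀ i k, DifferentiableAt ℝ (pder i (affTor Γ k)) p :=
    fun i k => diffAt_of_contDiffOn hU (contDiffOn_pder hU (hTcd k) i) hp
  -- the covariant derivative of torsion vanishes near p, hence so does its derivative
  have hzero : ∀ i j k, pder j (affTorCov Γ i k) p = 0 := by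
    intro i j k
    have hev : affTorCov Γ i k =ᶠ[𝓝 p] (fun _ => (0:ℝ)) :=
      Filter.eventuallyEq_of_mem (hU.mem_nhds hp) (fun q hq => hpar i k q hq)
    rw [pder, hev.fderiv_eq]
    simp
  -- expansion of the derivative of the covariant derivative
  have hexp : ∀ i j k, pder j (affTorCov Γ i k) p =
      pder j (pder i (affTor Γ k)) p
      + (pder j (Γ i 0 k) p * affTor Γ 0 p + Γ i 0 k p * pder j (affTor Γ 0) p
        + (pder j (Γ i 1 k) p * affTor Γ 1 p + Γ i 1 k p * pder j (affTor Γ 1) p))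
      - ((pder j (Γ i 0 0) p + pder j (Γ i 1 1) p) * affTor Γ k p
        + (Γ i 0 0 p + Γ i 1 1 p) * pder j (affTor Γ k) p) := by
    intro i j k
    have e : affTorCov Γ i k = fun q =>
        (pder i (affTor Γ k) q + (Γ i 0 k q * affTor Γ 0 q + Γ i 1 k q * affTor Γ 1 q))
        - (Γ i 0 0 q + Γ i 1 1 q) * affTor Γ k q := by
      funext q; simp [affTorCov, Fin.sum_univ_two]
    have d01 : DifferentiableAt ℝ (fun q => Γ i 0 k q * affTor Γ 0 q) p :=
      (hdΓ i 0 k).mul (hdT 0)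
    have d02 : DifferentiableAt ℝ (fun q => Γ i 1 k q * affTor Γ 1 q) p :=
      (hdΓ i 1 k).mul (hdT 1)
    have d0 : DifferentiableAt ℝ (fun q => Γ i 0 k q * affTor Γ 0 q + Γ i 1 k q * affTor Γ 1 q) p :=
      d01.add d02
    have d1 : DifferentiableAt ℝ (fun q =>
        pder i (affTor Γ k) q + (Γ i 0 k q * affTor Γ 0 q + Γ i 1 k q * affTor Γ 1 q)) p :=
      (hdpT i k).add d0
    have dtr : DifferentiableAt ℝ (fun q => Γ i 0 0 q + Γ i 1 1 q) p :=
      (hdΓ i 0 0).add (hdΓ i 1 1)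
    have d2 : DifferentiableAt ℝ (fun q => (Γ i 0 0 q + Γ i 1 1 q) * affTor Γ k q) p :=
      dtr.mul (hdT k)
    rw [e, pder_sub j d1 d2, pder_add j (hdpT i k) d0, pder_add j d01 d02,
      pder_mul j (hdΓ i 0 k) (hdT 0), pder_mul j (hdΓ i 1 k) (hdT 1),
      pder_mul j dtr (hdT k), pder_add j (hdΓ i 0 0) (hdΓ i 1 1)]
  -- first-order parallel equations at p
  have hfo : ∀ i k, pder i (affTor Γ k) p
      + (Γ i 0 k p * affTor Γ 0 p + Γ i 1 k p * affTor Γ 1 p)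
      - (Γ i 0 0 p + Γ i 1 1 p) * affTor Γ k p = 0 := by
    intro i k
    have := hpar i k p hp
    simpa [affTorCov, Fin.sum_univ_two] using this
  -- Clairaut
  have hcomm : ∀ k, pder 1 (pder 0 (affTor Γ k)) p = pder 0 (pder 1 (affTor Γ k)) p :=
    fun k => pder_comm hU (hTcd k) hp 1 0
  -- the curvature operator S_m{}^k := R_{12m}{}^k has T as eigenvector with eigenvalue tr S
  have hC10 := hfo 1 0
  have hC11 := hfo 1 1
  have hC00 := hfo 0 0
  have hC01 := hfo 0 1
  have hS0 : affCurv Γ 0 1 0 0 p * affTor Γ 0 p + affCurv Γ 0 1 1 0 p * affTor Γ 1 p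
        = (affCurv Γ 0 1 0 0 p + affCurv Γ 0 1 1 1 p) * affTor Γ 0 p := by
    have hA := (hexp 0 1 0).symm.trans (hzero 0 1 0)
    have hB := (hexp 1 0 0).symm.trans (hzero 1 0 0)
    rw [hcomm 0] at hA
    simp only [affCurv, Fin.sum_univ_two]
    linear_combination (-1 : ℝ) * hA + hB
      + (Γ 0 0 0 p - (Γ 0 0 0 p + Γ 0 1 1 p)) * hC10 + (Γ 0 1 0 p) * hC11
      + (-(Γ 1 0 0 p) + (Γ 1 0 0 p + Γ 1 1 1 p)) * hC00 + (-(Γ 1 1 0 p)) * hC01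
  have hS1 : affCurv Γ 0 1 0 1 p * affTor Γ 0 p + affCurv Γ 0 1 1 1 p * affTor Γ 1 p
        = (affCurv Γ 0 1 0 0 p + affCurv Γ 0 1 1 1 p) * affTor Γ 1 p := by
    have hA := (hexp 0 1 1).symm.trans (hzero 0 1 1)
    have hB := (hexp 1 0 1).symm.trans (hzero 1 0 1)
    rw [hcomm 1] at hA
    simp only [affCurv, Fin.sum_univ_two]
    linear_combination (-1 : ℝ) * hA + hB
      + (Γ 0 0 1 p) * hC10 + (Γ 0 1 1 p - (Γ 0 0 0 p + Γ 0 1 1 p)) * hC11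
      + (-(Γ 1 0 1 p)) * hC00 + (-(Γ 1 1 1 p) + (Γ 1 0 0 p + Γ 1 1 1 p)) * hC01
  -- determinant of S vanishes
  have hdet : affCurv Γ 0 1 0 0 p * affCurv Γ 0 1 1 1 p
      - affCurv Γ 0 1 0 1 p * affCurv Γ 0 1 1 0 p = 0 := by
    have h0 := hS0
    have h1 := hS1
    rcases hT with h | h
    · have key : (affCurv Γ 0 1 0 0 p * affCurv Γ 0 1 1 1 p
          - affCurv Γ 0 1 0 1 p * affCurv Γ 0 1 1 0 p) * affTor Γ 0 p = 0 := by
        linear_combination (-(affCurv Γ 0 1 0 0 p)) * h0 + (-(affCurv Γ 0 1 1 0 p)) * h1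
      exact (mul_eq_zero.mp key).resolve_right h
    · have key : (affCurv Γ 0 1 0 0 p * affCurv Γ 0 1 1 1 p
          - affCurv Γ 0 1 0 1 p * affCurv Γ 0 1 1 0 p) * affTor Γ 1 p = 0 := by
        linear_combination (-(affCurv Γ 0 1 0 1 p)) * h0 + (-(affCurv Γ 0 1 1 1 p)) * h1
      exact (mul_eq_zero.mp key).resolve_right h
  -- express the Ricci determinant through S
  have h00 : affRicci Γ 0 0 p = -(affCurv Γ 0 1 0 1 p) := by
    simp only [affRicci, affCurv, Fin.sum_univ_two]; ring
  have h01 : affRicci Γ 0 1 p = -(affCurv Γ 0 1 1 1 p) := by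
    simp only [affRicci, affCurv, Fin.sum_univ_two]; ring
  have h10 : affRicci Γ 1 0 p = affCurv Γ 0 1 0 0 p := by
    simp only [affRicci, affCurv, Fin.sum_univ_two]; ring
  have h11 : affRicci Γ 1 1 p = affCurv Γ 0 1 1 0 p := by
    simp only [affRicci, affCurv, Fin.sum_univ_two]; ring
  rw [h00, h01, h10, h11]
  linear_combination hdet
end
end

section
/- Fix ξ ∈ ℝ and, on U = {(x¹,x²) ∈ ℝ² : x¹ > 0}, consider the Type ℬ connection whose only nonzero Christoffel symbols are Γ_{11}{}^1 = −2/x¹, Γ_{11}{}^2 = ξ/x¹, Γ_{21}{}^1 = −1/x¹, Γ_{21}{}^2 = ξ/x¹, Γ_{22}{}^2 = 1/x¹. Then: (a) the Ricci tensor is ρ_{11} = ξ/(x¹)², ρ_{12} = ρ_{21} = 1/(x¹)², ρ_{22} = 0; (b) the Ricci tensor is parallel: ρ_{jk;i} = 0 on U for all i,j,k; (c) the torsion components are T¹ = 1/(2x¹), T² = −ξ/(2x¹); (d) the covariant derivative of the torsion satisfies T¹{}_{;1} = T¹{}_{;2} = −1/(2(x¹)²) and T²{}_{;1} = T²{}_{;2}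 = 0; in particular the torsion is not parallel. -/
noncomputable section

open scoped BigOperators

/-- The Type ℬ connection on `{x¹ > 0}` with only nonzero Christoffel symbols
`Γ_{11}{}^1 = −2/x¹`, `Γ_{11}{}^2 = ξ/x¹`, `Γ_{21}{}^1 = −1/x¹`, `Γ_{21}{}^2 = ξ/x¹`,
`Γ_{22}{}^2 = 1/x¹`. -/
noncomputable def GammaB1 (ξ : ℝ) : Fin 2 → Fin 2 → Fin 2 → ℝ × ℝ → ℝ :=
  fun i j k p =>
    if i = 0 ∧ j = 0 ∧ k = 0 then -2 / p.1
    else if i = 0 ∧ j = 0 ∧ k = 1 then ξ / p.1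
    else if i = 1 ∧ j = 0 ∧ k = 0 then -1 / p.1
    else if i = 1 ∧ j = 0 ∧ k = 1 then ξ / p.1
    else if i = 1 ∧ j = 1 ∧ k = 1 then 1 / p.1
    else 0

/-!
A Type ℬ connection has Christoffel symbols `C_{ij}{}^k / x¹` with constant `C`. Each
derivative or product of Christoffel symbols then contributes one more factor `1/x¹`, so
the curvature, Ricci tensor and covariant derivatives of Ricci and torsion are constant
tensors divided by a power of `x¹`, and everything reduces to finite arithmetic on `C`.
-/

lemma pder_comp_fst {g : ℝ → ℝ} {g' : ℝ} {p : ℝ × ℝ} (hg : HasDerivAt g g' p.1) (i : Fin 2) :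
    pder i (fun q : ℝ × ℝ => g q.1) p = g' * (coordVec i).1 := by
  have hfst : HasFDerivAt (fun q : ℝ × ℝ => g q.1)
      ((ContinuousLinearMap.smulRight (1 : ℝ →L[ℝ] ℝ) g').comp
        (ContinuousLinearMap.fst ℝ ℝ ℝ)) p :=
    hg.hasFDerivAt.comp p hasFDerivAt_fst
  rw [pder, hfst.fderiv]
  simp [mul_comm]

lemma pder_const_div_fst (c : ℝ) (i : Fin 2) {p : ℝ × ℝ} (hp : p.1 ≠ 0) :
    pder i (fun q : ℝ × ℝ => c / q.1) p = -c / p.1 ^ 2 * (coordVec i).1 := by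
  refine pder_comp_fst (g := fun x => c / x) ?_ i
  simpa [div_eq_mul_inv, neg_div] using (hasDerivAt_inv hp).const_mul c

lemma pder_const_div_fst_sq (c : ℝ) (i : Fin 2) {p : ℝ × ℝ} (hp : p.1 ≠ 0) :
    pder i (fun q : ℝ × ℝ => c / q.1 ^ 2) p = -2 * c / p.1 ^ 3 * (coordVec i).1 := by
  refine pder_comp_fst (g := fun x => c / x ^ 2) ?_ i
  refine ((hasDerivAt_const p.1 c).div (hasDerivAt_pow 2 p.1) (pow_ne_zero 2 hp)).congr_deriv ?_
  field_simp
  ring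

lemma pder_congr {f g : ℝ × ℝ → ℝ} {p : ℝ × ℝ} (h : f =ᶠ[nhds p] g) (i : Fin 2) :
    pder i f p = pder i g p := by
  rw [pder, pder, h.fderiv_eq]

def typeBConn (C : Fin 2 → Fin 2 → Fin 2 → ℝ) : Fin 2 → Fin 2 → Fin 2 → ℝ × ℝ → ℝ :=
  fun i j k q => C i j k / q.1

namespace TypeB

variable (C : Fin 2 → Fin 2 → Fin 2 → ℝ)

def curvCoeff (i j k l : Fin 2) : ℝ :=
  -(C j k l * (coordVec i).1) + C i k l * (coordVec j).1 +
    ∑ m : Fin 2, (C i m l * C j k m - C j m l * C i k m)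

def ricciCoeff (j k : Fin 2) : ℝ :=
  curvCoeff C 0 j k 0 + curvCoeff C 1 j k 1

def ricciCovCoeff (i j k : Fin 2) : ℝ :=
  -2 * ricciCoeff C j k * (coordVec i).1 -
    ∑ m : Fin 2, (C i j m * ricciCoeff C m k + C i k m * ricciCoeff C j m)

def torCoeff (k : Fin 2) : ℝ :=
  (1 / 2) * (C 0 1 k - C 1 0 k)

def torCovCoeff (i k : Fin 2) : ℝ :=
  -(torCoeff C k * (coordVec i).1) + ∑ m : Fin 2, C i m k * torCoeff C m
    - (C i 0 0 + C i 1 1) * torCoeff C k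

variable {C}

lemma pder_typeBConn (i a b c : Fin 2) {p : ℝ × ℝ} (hp : p.1 ≠ 0) :
    pder i (typeBConn C a b c) p = -C a b c / p.1 ^ 2 * (coordVec i).1 :=
  pder_const_div_fst _ i hp

lemma affCurv_eq (i j k l : Fin 2) {p : ℝ × ℝ} (hp : p.1 ≠ 0) :
    affCurv (typeBConn C) i j k l p = curvCoeff C i j k l / p.1 ^ 2 := by
  simp only [affCurv, curvCoeff, pder_typeBConn _ _ _ _ hp, typeBConn, Fin.sum_univ_two]
  field_simp
  ring

lemma affRicci_eq (j k : Fin 2) {p : ℝ × ℝ} (hp : p.1 ≠ 0) :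
    affRicci (typeBConn C) j k p = ricciCoeff C j k / p.1 ^ 2 := by
  rw [affRicci, affCurv_eq _ _ _ _ hp, affCurv_eq _ _ _ _ hp, ricciCoeff, add_div]

lemma affRicciCov_eq (i j k : Fin 2) {p : ℝ × ℝ} (hp : p.1 ≠ 0) :
    affRicciCov (typeBConn C) i j k p = ricciCovCoeff C i j k / p.1 ^ 3 := by
  have hρ : affRicci (typeBConn C) j k =ᶠ[nhds p] fun q => ricciCoeff C j k / q.1 ^ 2 := by
    filter_upwards [(isOpen_ne_fun continuous_fst continuous_const).mem_nhds hp]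
      with q hq using affRicci_eq j k hq
  rw [affRicciCov, pder_congr hρ, pder_const_div_fst_sq _ _ hp]
  simp only [ricciCovCoeff, typeBConn, affRicci_eq _ _ hp, Fin.sum_univ_two]
  field_simp

lemma affTor_eq (k : Fin 2) : affTor (typeBConn C) k = fun q => torCoeff C k / q.1 := by
  ext q
  simp only [affTor, torCoeff, typeBConn]
  ring

lemma affTorCov_eq (i k : Fin 2) {p : ℝ × ℝ} (hp : p.1 ≠ 0) :
    affTorCov (typeBConn C) i k p = torCovCoeff C i k / p.1 ^ 2 := by
  simp only [affTorCov, torCovCoeff, affTor_eq, typeBConn, pder_const_div_fst _ _ hp,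
    Fin.sum_univ_two]
  field_simp

end TypeB

open TypeB

def coeffB1 (ξ : ℝ) : Fin 2 → Fin 2 → Fin 2 → ℝ :=
  ![![![-2, ξ], ![0, 0]], ![![-1, ξ], ![0, 1]]]

lemma GammaB1_eq_typeBConn (ξ : ℝ) : GammaB1 ξ = typeBConn (coeffB1 ξ) := by
  ext i j k q
  fin_cases i <;> fin_cases j <;> fin_cases k <;> simp [GammaB1, typeBConn, coeffB1]

lemma ricciCoeff_coeffB1 (ξ : ℝ) : ricciCoeff (coeffB1 ξ) = ![![ξ, 1], ![1, 0]] := by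
  ext j k
  fin_cases j <;> fin_cases k <;>
    simp [ricciCoeff, curvCoeff, coeffB1, coordVec, Fin.sum_univ_two]
  all_goals ring

lemma ricciCovCoeff_coeffB1 (ξ : ℝ) (i j k : Fin 2) : ricciCovCoeff (coeffB1 ξ) i j k = 0 := by
  fin_cases i <;> fin_cases j <;> fin_cases k <;>
    simp only [ricciCovCoeff, ricciCoeff_coeffB1, Fin.sum_univ_two] <;>
    simp [coeffB1, coordVec]
  all_goals ring

lemma torCoeff_coeffB1 (ξ : ℝ) : torCoeff (coeffB1 ξ) = ![1 / 2, -ξ / 2] := by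
  ext k
  fin_cases k <;> simp [torCoeff, coeffB1]
  ring

lemma torCovCoeff_coeffB1 (ξ : ℝ) : torCovCoeff (coeffB1 ξ) = ![![-1 / 2, 0], ![-1 / 2, 0]] := by
  ext i k
  fin_cases i <;> fin_cases k <;>
    simp only [torCovCoeff, torCoeff_coeffB1, Fin.sum_univ_two] <;>
    simp [coeffB1, coordVec]
  all_goals ring

/-- for the Type ℬ structure above: (a) `ρ_{11} = ξ/(x¹)²`,
`ρ_{12} = ρ_{21} = 1/(x¹)²`, `ρ_{22} = 0`; (b) the Ricci tensor is parallel;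
(c) `T¹ = 1/(2x¹)`, `T² = −ξ/(2x¹)`; (d) `T¹{}_{;1} = T¹{}_{;2} = −1/(2(x¹)²)` and
`T²{}_{;1} = T²{}_{;2} = 0`; in particular the torsion is not parallel. -/
theorem typeB1_symmetric_nonparallel_torsion (ξ : ℝ) :
    (∀ p ∈ {q : ℝ × ℝ | 0 < q.1},
        affRicci (GammaB1 ξ) 0 0 p = ξ / p.1 ^ 2 ∧
        affRicci (GammaB1 ξ) 0 1 p = 1 / p.1 ^ 2 ∧
        affRicci (GammaB1 ξ) 1 0 p = 1 / p.1 ^ 2 ∧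
        affRicci (GammaB1 ξ) 1 1 p = 0) ∧
    (∀ i j k, ∀ p ∈ {q : ℝ × ℝ | 0 < q.1}, affRicciCov (GammaB1 ξ) i j k p = 0) ∧
    (∀ p ∈ {q : ℝ × ℝ | 0 < q.1},
        affTor (GammaB1 ξ) 0 p = 1 / (2 * p.1) ∧
        affTor (GammaB1 ξ) 1 p = -ξ / (2 * p.1)) ∧
    (∀ p ∈ {q : ℝ × ℝ | 0 < q.1},
        affTorCov (GammaB1 ξ) 0 0 p = -1 / (2 * p.1 ^ 2) ∧
        affTorCov (GammaB1 ξ) 1 0 p = -1 / (2 * p.1 ^ 2) ∧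
        affTorCov (GammaB1 ξ) 0 1 p = 0 ∧
        affTorCov (GammaB1 ξ) 1 1 p = 0) ∧
    (∃ i k, ∃ p ∈ {q : ℝ × ℝ | 0 < q.1}, affTorCov (GammaB1 ξ) i k p ≠ 0) := by
  rw [GammaB1_eq_typeBConn]
  refine ⟨fun p hp => ?_, fun i j k p hp => ?_, fun p _ => ?_, fun p hp => ?_, ?_⟩
  · simp [affRicci_eq _ _ (ne_of_gt hp), ricciCoeff_coeffB1]
  · rw [affRicciCov_eq _ _ _ (ne_of_gt hp), ricciCovCoeff_coeffB1, zero_div]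
  · simp only [affTor_eq, torCoeff_coeffB1, Matrix.cons_val_zero, Matrix.cons_val_one,
      Matrix.cons_val_fin_one]
    constructor <;> ring
  · simp only [affTorCov_eq _ _ (ne_of_gt hp), torCovCoeff_coeffB1, Matrix.cons_val_zero,
      Matrix.cons_val_one, Matrix.cons_val_fin_one]
    refine ⟨?_, ?_, zero_div _, zero_div _⟩ <;> ring
  · refine ⟨0, 0, (1, 0), show (0 : ℝ) < 1 from one_pos, ?_⟩
    simp [affTorCov_eq (p := (1, 0)) _ _ one_ne_zero, torCovCoeff_coeffB1]
end
end
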